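/- arXiv:1504.06459 — 3 statements merged into one kernel-verified Lean document; each statement's English description precedes it below -/
import Mathlib

section
/- The number of permutations lying on a geodesic between the identity and a product γ₁⋯γ_L of disjoint canonical full cycles on blocks of sizes p₁,…,p_L equals Cat_{p₁}·Cat_{p₂}·⋯·Cat_{p_L}, the product of Catalan numbers of the block sizes. -/
/-!
Write `ℓ` for the transposition length. Multiplying by a transposition `(a b)` splits the cycle
through `a` and `b` when they lie in one cycle and merges their cycles otherwise, so
`ℓ σ = p - #cycles(σ)`, and along a geodesic `id → π → ς` every transposition merges: the cycles
of `π` refine those of `ς`. Fix `x` moved by `ς`, with cycle of length `n`, and sort the geodesic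
`π` by the value `π x = ς^(j+1) x`, `j < n`. Peeling off the transposition `(x, π x)` and then
the point `x` identifies this fibre with the geodesics to a permutation in which the cycle of `x`
is replaced by cycles of lengths `j` and `n - 1 - j` (and the fixed point `x`). Induction on `ℓ ς`
and `Cat_n = ∑_{j<n} Cat_j Cat_{n-1-j}` give the product formula.
-/

/-- The minimal number of transpositions needed to write a permutation of
`{1,…,p}` as a product of transpositions. -/
noncomputable def transLen {p : ℕ} (π : Equiv.Perm (Fin p)) : ℕ :=
  sInf {n : ℕ | ∃ l : List (Equiv.Perm (Fin p)),
    l.length = n ∧ (∀ τ ∈ l, τ.IsSwap) ∧ l.prod = π}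

/-- The number of cycles of a permutation, counting fixed points as
(trivial) cycles. -/
def cycleCount {p : ℕ} (π : Equiv.Perm (Fin p)) : ℕ :=
  π.cycleType.card + (Finset.univ.filter fun x => π x = x).card

/-- The canonical full cycle `(p … 1)`, sending `i` to `i - 1` (mod `p`). -/
def gammaPerm (p : ℕ) : Equiv.Perm (Fin p) := (finRotate p)⁻¹

open Equiv Finset

namespace Equiv.Perm

variable {α : Type*}

lemma SameCycle.exists_pow_lt_of_pow_apply_eq [Finite α] {σ : Perm α} {x y : α} {k : ℕ}
    (hk : 0 < k) (hx : (σ ^ k) x = x) (h : σ.SameCycle x y) : ∃ i < k, (σ ^ i) x = y := by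
  obtain ⟨n, rfl⟩ := h.exists_nat_pow_eq
  have hper : Function.IsPeriodicPt σ k x := by
    simpa [Function.IsPeriodicPt, Function.IsFixedPt, ← coe_pow] using hx
  exact ⟨n % k, Nat.mod_lt _ hk, by simpa [← coe_pow] using hper.iterate_mod_apply n⟩

lemma swap_mul_pow_apply_of_forall [DecidableEq α] {σ : Perm α} {a b x : α} {m : ℕ}
    (h : ∀ j, 0 < j → j ≤ m → (σ ^ j) x ≠ a ∧ (σ ^ j) x ≠ b) :
    ((swap a b * σ) ^ m) x = (σ ^ m) x := by
  induction m with
  | zero => rfl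
  | succ m ih =>
    obtain ⟨ha, hb⟩ := h (m + 1) m.succ_pos le_rfl
    rw [pow_succ', mul_apply, ih fun j hj hjm => h j hj (by omega), mul_apply, ← mul_apply σ,
      ← pow_succ', swap_apply_of_ne_of_ne ha hb]

section CycleClasses

variable [Fintype α] [DecidableEq α] {σ : Perm α} {x y : α}

def cycleClass (σ : Perm α) (x : α) : Finset α := {y | σ.SameCycle x y}

def cycleClasses (σ : Perm α) : Finset (Finset α) := univ.image σ.cycleClass

@[simp] lemma mem_cycleClass : y ∈ σ.cycleClass x ↔ σ.SameCycle x y := by simp [cycleClass]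

lemma cycleClass_eq_cycleClass_iff : σ.cycleClass x = σ.cycleClass y ↔ σ.SameCycle x y := by
  refine ⟨fun h => ?_, fun h => ?_⟩
  · rw [← mem_cycleClass, h, mem_cycleClass]
  · ext z
    simp only [mem_cycleClass]
    exact ⟨h.symm.trans, h.trans⟩

lemma cycleClass_mem_cycleClasses (σ : Perm α) (x : α) : σ.cycleClass x ∈ σ.cycleClasses :=
  mem_image_of_mem _ (mem_univ x)

lemma mem_cycleClasses {C : Finset α} : C ∈ σ.cycleClasses ↔ ∃ x, σ.cycleClass x = C := by
  simp [cycleClasses]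

lemma eq_cycleClass_of_mem {C : Finset α} (hC : C ∈ σ.cycleClasses) (hy : y ∈ C) :
    C = σ.cycleClass y := by
  obtain ⟨x, rfl⟩ := mem_cycleClasses.1 hC
  exact cycleClass_eq_cycleClass_iff.2 (mem_cycleClass.1 hy)

lemma cycleClass_of_apply_eq_self (hx : σ x = x) : σ.cycleClass x = {x} := by
  ext y
  simp only [mem_cycleClass, mem_singleton]
  exact ⟨fun h => (h.eq_of_left hx).symm, fun h => h ▸ .rfl⟩

lemma one_lt_card_cycleClass_iff : 1 < #(σ.cycleClass x) ↔ σ x ≠ x := by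
  refine ⟨fun h hx => ?_, fun hx => one_lt_card.2 ⟨x, mem_cycleClass.2 .rfl, σ x,
    mem_cycleClass.2 (sameCycle_apply_right.2 .rfl), Ne.symm hx⟩⟩
  rw [cycleClass_of_apply_eq_self hx, card_singleton] at h
  exact lt_irrefl _ h

lemma cycleClass_injOn_fixedPoints (σ : Perm α) : Set.InjOn σ.cycleClass {x | σ x = x} :=
  fun x hx y hy h => by
    rwa [cycleClass_of_apply_eq_self hx, cycleClass_of_apply_eq_self hy, singleton_inj] at h

lemma card_cycleClasses_le (σ : Perm α) : #σ.cycleClasses ≤ Fintype.card α :=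
  card_image_le

lemma isCycleOn_cycleClass (σ : Perm α) (x : α) : σ.IsCycleOn (σ.cycleClass x) :=
  ⟨σ.bijOn' (fun y hy => by simpa using hy) (fun y hy => by simpa using hy),
    fun _ hy _ hz => (mem_cycleClass.1 hy).symm.trans (mem_cycleClass.1 hz)⟩

lemma pow_card_cycleClass_apply (σ : Perm α) (x : α) : (σ ^ #(σ.cycleClass x)) x = x :=
  (σ.isCycleOn_cycleClass x).pow_card_apply (mem_cycleClass.2 .rfl)

lemma image_range_card_cycleClass (σ : Perm α) (x : α) :
    (range #(σ.cycleClass x)).image (fun i => (σ ^ i) x) = σ.cycleClass x := by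
  ext y
  simp only [mem_image, mem_range]
  refine ⟨fun ⟨i, _, hi⟩ => hi ▸ mem_cycleClass.2 (sameCycle_pow_right.2 .rfl), fun hy => ?_⟩
  exact (σ.isCycleOn_cycleClass x).exists_pow_eq (mem_cycleClass.2 .rfl) hy

lemma pow_apply_injOn_range (σ : Perm α) (x : α) :
    Set.InjOn (fun i => (σ ^ i) x) (range #(σ.cycleClass x)) := fun _ hi _ hj hij =>
  (((σ.isCycleOn_cycleClass x).pow_apply_eq_pow_apply (mem_cycleClass.2 .rfl)).1 hij).eq_of_lt_of_lt
    (mem_range.1 hi) (mem_range.1 hj)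

lemma pow_apply_ne_pow_apply {i j : ℕ} (hij : i ≠ j) (hi : i < #(σ.cycleClass x))
    (hj : j < #(σ.cycleClass x)) : (σ ^ i) x ≠ (σ ^ j) x :=
  fun h => hij (σ.pow_apply_injOn_range x (mem_range.2 hi) (mem_range.2 hj) h)

lemma pow_apply_ne_self {i : ℕ} (h0 : 0 < i) (hi : i < #(σ.cycleClass x)) : (σ ^ i) x ≠ x :=
  pow_apply_ne_pow_apply (j := 0) h0.ne' hi (h0.trans hi)

lemma SameCycle.exists_pow_apply_eq (hxy : x ≠ y) (h : σ.SameCycle x y) :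
    ∃ k, 0 < k ∧ k < #(σ.cycleClass x) ∧ (σ ^ k) x = y := by
  obtain ⟨k, hk, rfl⟩ := mem_image.1 ((image_range_card_cycleClass σ x).symm ▸ mem_cycleClass.2 h)
  exact ⟨k, Nat.pos_of_ne_zero fun h0 => hxy (by simp [h0]), mem_range.1 hk, Eq.refl _⟩

end CycleClasses

section SwapMul

variable [Fintype α] [DecidableEq α] {σ : Perm α} {a b x y : α}

lemma SameCycle.of_swap_mul (h : (swap a b * σ).SameCycle x y) (hab : σ.SameCycle a b) :
    σ.SameCycle x y := by
  have hstep : ∀ z, σ.SameCycle z ((swap a b * σ) z) := by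
    intro z
    rw [mul_apply, ← sameCycle_apply_left]
    rcases eq_or_ne (σ z) a with hza | hza
    · rwa [hza, swap_apply_left]
    rcases eq_or_ne (σ z) b with hzb | hzb
    · rw [hzb, swap_apply_right]
      exact hab.symm
    · rw [swap_apply_of_ne_of_ne hza hzb]
  obtain ⟨n, rfl⟩ := h.exists_nat_pow_eq
  clear h
  induction n with
  | zero => exact .rfl
  | succ n ih =>
    rw [pow_succ', mul_apply]
    exact ih.trans (hstep _)

lemma sameCycle_swap_mul_of_not_sameCycle (h : ¬σ.SameCycle a b) :
    (swap a b * σ).SameCycle a b := by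
  -- `swap a b * σ` runs along the `σ`-cycle of `a` and, where that cycle would close, jumps to `b`
  set n := #(σ.cycleClass a)
  have hn : 0 < n := card_pos.2 ⟨a, mem_cycleClass.2 .rfl⟩
  have hwalk : ((swap a b * σ) ^ (n - 1)) a = (σ ^ (n - 1)) a :=
    swap_mul_pow_apply_of_forall fun j hj hjn =>
      ⟨pow_apply_ne_self hj (by omega), fun hb => h (hb ▸ sameCycle_pow_right.2 .rfl)⟩
  refine ⟨n, ?_⟩
  rw [zpow_natCast, ← Nat.sub_add_cancel hn, pow_succ', mul_apply, hwalk, mul_apply,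
    ← mul_apply σ, ← pow_succ', Nat.sub_add_cancel hn, pow_card_cycleClass_apply, swap_apply_left]

lemma SameCycle.swap_mul_of_not_sameCycle (h : ¬σ.SameCycle a b) (hxy : σ.SameCycle x y) :
    (swap a b * σ).SameCycle x y :=
  SameCycle.of_swap_mul (by rwa [swap_mul_self_mul]) (sameCycle_swap_mul_of_not_sameCycle h)

variable {k : ℕ}

lemma cycleClass_swap_mul_pow (hk0 : 0 < k) (hk : k < #(σ.cycleClass a)) :
    (swap a ((σ ^ k) a) * σ).cycleClass a = (range k).image fun i => (σ ^ i) a := by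
  set τ := swap a ((σ ^ k) a) * σ
  have hwalk : ∀ i < k, (τ ^ i) a = (σ ^ i) a := fun i hi =>
    swap_mul_pow_apply_of_forall fun j hj hji =>
      ⟨pow_apply_ne_self hj (by omega), pow_apply_ne_pow_apply (by omega) (by omega) hk⟩
  have hper : (τ ^ k) a = a := by
    rw [← Nat.sub_add_cancel hk0, pow_succ', mul_apply, hwalk _ (by omega), mul_apply,
      ← mul_apply σ, ← pow_succ', Nat.sub_add_cancel hk0, swap_apply_right]
  ext y
  simp only [mem_cycleClass, mem_image, mem_range]
  constructor
  · intro h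
    obtain ⟨i, hi, rfl⟩ := h.exists_pow_lt_of_pow_apply_eq hk0 hper
    exact ⟨i, hi, (hwalk i hi).symm⟩
  · rintro ⟨i, hi, rfl⟩
    rw [← hwalk i hi]
    exact sameCycle_pow_right.2 .rfl

lemma card_cycleClass_swap_mul_pow (hk0 : 0 < k) (hk : k < #(σ.cycleClass a)) :
    #((swap a ((σ ^ k) a) * σ).cycleClass a) = k := by
  rw [cycleClass_swap_mul_pow hk0 hk, card_image_of_injOn, card_range]
  exact (σ.pow_apply_injOn_range a).mono (by simpa using hk.le)

lemma not_sameCycle_swap_mul (hab : a ≠ b) (h : σ.SameCycle a b) :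
    ¬(swap a b * σ).SameCycle a b := by
  obtain ⟨k, hk0, hk, rfl⟩ := h.exists_pow_apply_eq hab
  rw [← mem_cycleClass, cycleClass_swap_mul_pow hk0 hk]
  intro hmem
  obtain ⟨i, hi, hik⟩ := mem_image.1 hmem
  exact pow_apply_ne_pow_apply (mem_range.1 hi).ne ((mem_range.1 hi).trans hk) hk hik

lemma cycleClass_swap_mul_union (hab : a ≠ b) (h : σ.SameCycle a b) :
    (swap a b * σ).cycleClass a ∪ (swap a b * σ).cycleClass b = σ.cycleClass a := by
  refine Subset.antisymm (union_subset ?_ ?_) ?_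
  · exact fun y hy => mem_cycleClass.2 ((mem_cycleClass.1 hy).of_swap_mul h)
  · exact fun y hy => mem_cycleClass.2 (h.trans ((mem_cycleClass.1 hy).of_swap_mul h))
  obtain ⟨k, hk0, hk, rfl⟩ := h.exists_pow_apply_eq hab
  rw [← image_range_card_cycleClass σ a, cycleClass_swap_mul_pow hk0 hk]
  intro y hy
  obtain ⟨i, hi, rfl⟩ := mem_image.1 hy
  rw [mem_range] at hi
  rcases lt_or_ge i k with hik | hki
  · exact mem_union_left _ (mem_image.2 ⟨i, mem_range.2 hik, rfl⟩)
  · refine mem_union_right _ (mem_cycleClass.2 ?_)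
    have hwalk : ((swap a ((σ ^ k) a) * σ) ^ (i - k)) ((σ ^ k) a) = (σ ^ i) a := by
      rw [swap_mul_pow_apply_of_forall, ← mul_apply, ← pow_add, Nat.sub_add_cancel hki]
      intro j hj hji
      rw [← mul_apply, ← pow_add]
      exact ⟨pow_apply_ne_self (by omega) (by omega),
        pow_apply_ne_pow_apply (by omega) (by omega) hk⟩
    rw [← hwalk]
    exact sameCycle_pow_right.2 .rfl

lemma card_cycleClass_swap_mul_add (hab : a ≠ b) (h : σ.SameCycle a b) :
    #((swap a b * σ).cycleClass a) + #((swap a b * σ).cycleClass b) = #(σ.cycleClass a) := by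
  rw [← cycleClass_swap_mul_union hab h, card_union_of_disjoint (disjoint_left.2 fun z hza hzb =>
    not_sameCycle_swap_mul hab h ((mem_cycleClass.1 hza).trans (mem_cycleClass.1 hzb).symm))]

lemma cycleClass_swap_mul_of_not_sameCycle (h : σ.SameCycle a b) (hx : ¬σ.SameCycle x a) :
    (swap a b * σ).cycleClass x = σ.cycleClass x := by
  ext y
  simp only [mem_cycleClass]
  refine ⟨fun hy => hy.of_swap_mul h, fun hy => ?_⟩
  obtain ⟨m, rfl⟩ := hy.exists_nat_pow_eq
  rw [← swap_mul_pow_apply_of_forall (a := a) (b := b)]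
  · exact sameCycle_pow_right.2 .rfl
  · intro j _ _
    have hxj : σ.SameCycle x ((σ ^ j) x) := sameCycle_pow_right.2 .rfl
    exact ⟨fun he => hx (he ▸ hxj), fun he => hx (he ▸ hxj |>.trans h.symm)⟩

lemma cycleClasses_swap_mul (hab : a ≠ b) (h : σ.SameCycle a b) :
    (swap a b * σ).cycleClasses = insert ((swap a b * σ).cycleClass a)
      (insert ((swap a b * σ).cycleClass b) (σ.cycleClasses.erase (σ.cycleClass a))) := by
  ext C
  simp only [mem_insert, mem_erase, mem_cycleClasses]
  constructor
  · rintro ⟨x, rfl⟩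
    by_cases hx : σ.SameCycle x a
    · have hx' := cycleClass_swap_mul_union hab h ▸ mem_cycleClass.2 hx.symm
      rcases mem_union.1 hx' with hxa | hxb
      · exact .inl (cycleClass_eq_cycleClass_iff.2 (mem_cycleClass.1 hxa).symm)
      · exact .inr (.inl (cycleClass_eq_cycleClass_iff.2 (mem_cycleClass.1 hxb).symm))
    · refine .inr (.inr ⟨?_, x, (cycleClass_swap_mul_of_not_sameCycle h hx).symm⟩)
      rw [cycleClass_swap_mul_of_not_sameCycle h hx, Ne, cycleClass_eq_cycleClass_iff]
      exact hx
  · rintro (rfl | rfl | ⟨hC, x, rfl⟩)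
    · exact ⟨a, rfl⟩
    · exact ⟨b, rfl⟩
    · exact ⟨x, cycleClass_swap_mul_of_not_sameCycle h (mt cycleClass_eq_cycleClass_iff.2 hC)⟩

lemma cycleClass_swap_mul_right_notMem (h : σ.SameCycle a b) :
    (swap a b * σ).cycleClass b ∉ σ.cycleClasses.erase (σ.cycleClass a) := by
  intro hmem
  obtain ⟨hne, hC⟩ := mem_erase.1 hmem
  refine hne ((eq_cycleClass_of_mem hC (mem_cycleClass.2 .rfl)).trans ?_)
  exact cycleClass_eq_cycleClass_iff.2 h.symm

lemma cycleClass_swap_mul_left_notMem (hab : a ≠ b) (h : σ.SameCycle a b) :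
    (swap a b * σ).cycleClass a ∉
      insert ((swap a b * σ).cycleClass b) (σ.cycleClasses.erase (σ.cycleClass a)) := by
  rw [mem_insert, mem_erase, not_or, cycleClass_eq_cycleClass_iff]
  exact ⟨not_sameCycle_swap_mul hab h,
    fun ⟨hne, hC⟩ => hne (eq_cycleClass_of_mem hC (mem_cycleClass.2 .rfl))⟩

lemma card_cycleClasses_swap_mul (hab : a ≠ b) (h : σ.SameCycle a b) :
    #(swap a b * σ).cycleClasses = #σ.cycleClasses + 1 := by
  rw [cycleClasses_swap_mul hab h, card_insert_of_notMem (cycleClass_swap_mul_left_notMem hab h),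
    card_insert_of_notMem (cycleClass_swap_mul_right_notMem h),
    card_erase_add_one (cycleClass_mem_cycleClasses σ a)]

lemma prod_erase_cycleClasses_swap_mul {M : Type*} [CommMonoid M] (f : ℕ → M) (hab : a ≠ b)
    (h : σ.SameCycle a b) :
    ∏ C ∈ (swap a b * σ).cycleClasses.erase ((swap a b * σ).cycleClass a), f #C =
      f #((swap a b * σ).cycleClass b) * ∏ C ∈ σ.cycleClasses.erase (σ.cycleClass a), f #C := by
  rw [cycleClasses_swap_mul hab h, erase_insert (cycleClass_swap_mul_left_notMem hab h),
    prod_insert (cycleClass_swap_mul_right_notMem h)]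

end SwapMul

section AbsLength

variable [Fintype α] [DecidableEq α] {σ : Perm α} {a b x : α}

/-- Shown to be the transposition length in `transLen_eq_absLength`. -/
def absLength (σ : Perm α) : ℕ := Fintype.card α - #σ.cycleClasses

lemma absLength_swap_mul_of_sameCycle (hab : a ≠ b) (h : σ.SameCycle a b) :
    absLength (swap a b * σ) + 1 = absLength σ := by
  have := card_cycleClasses_swap_mul hab h
  have := card_cycleClasses_le (swap a b * σ)
  unfold absLength
  omega

lemma absLength_swap_mul_of_not_sameCycle (h : ¬σ.SameCycle a b) :
    absLength (swap a b * σ) = absLength σ + 1 := by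
  have hab : a ≠ b := fun hab => h (hab ▸ .rfl)
  simpa [swap_mul_self_mul] using
    (absLength_swap_mul_of_sameCycle hab (sameCycle_swap_mul_of_not_sameCycle h)).symm

lemma absLength_swap_mul_le_of_sameCycle (h : σ.SameCycle a b) :
    absLength (swap a b * σ) ≤ absLength σ := by
  rcases eq_or_ne a b with rfl | hab
  · rw [swap_self, ← one_def, one_mul]
  · have := absLength_swap_mul_of_sameCycle hab h
    omega

lemma absLength_swap_mul_le (a b : α) (σ : Perm α) :
    absLength (swap a b * σ) ≤ absLength σ + 1 := by
  by_cases h : σ.SameCycle a b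
  · exact (absLength_swap_mul_le_of_sameCycle h).trans (Nat.le_succ _)
  · exact (absLength_swap_mul_of_not_sameCycle h).le

lemma absLength_swap_apply_mul (hx : σ x ≠ x) : absLength (swap x (σ x) * σ) + 1 = absLength σ :=
  absLength_swap_mul_of_sameCycle (Ne.symm hx) (sameCycle_apply_right.2 .rfl)

lemma absLength_swap_apply_mul_le (σ : Perm α) (x : α) :
    absLength (swap x (σ x) * σ) ≤ absLength σ :=
  absLength_swap_mul_le_of_sameCycle (sameCycle_apply_right.2 .rfl)

@[simp] lemma absLength_one : absLength (1 : Perm α) = 0 := by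
  rw [absLength, cycleClasses,
    card_image_of_injOn ((cycleClass_injOn_fixedPoints 1).mono fun _ _ => rfl), card_univ,
    Nat.sub_self]

lemma eq_one_of_absLength_eq_zero (h : absLength σ = 0) : σ = 1 := by
  refine Equiv.ext fun x => by_contra fun hx => ?_
  have := absLength_swap_apply_mul hx
  omega

lemma absLength_inv (σ : Perm α) : absLength σ⁻¹ = absLength σ := by
  have : σ⁻¹.cycleClass = σ.cycleClass := by
    ext x y
    simp [sameCycle_inv]
  rw [absLength, cycleClasses, this, ← cycleClasses, ← absLength]

lemma absLength_list_prod_le (l : List (Perm α)) (hl : ∀ τ ∈ l, τ.IsSwap) :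
    absLength l.prod ≤ l.length := by
  induction l with
  | nil => simp
  | cons τ l ih =>
    obtain ⟨a, b, -, rfl⟩ := hl τ List.mem_cons_self
    have := ih fun τ hτ => hl τ (List.mem_cons_of_mem _ hτ)
    rw [List.prod_cons, List.length_cons]
    exact (absLength_swap_mul_le a b _).trans (by omega)

lemma exists_list_isSwap_prod_eq (σ : Perm α) :
    ∃ l : List (Perm α), (∀ τ ∈ l, τ.IsSwap) ∧ l.prod = σ ∧ l.length = absLength σ := by
  induction hn : absLength σ generalizing σ with
  | zero => exact ⟨[], by simp, (eq_one_of_absLength_eq_zero hn).symm, rfl⟩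
  | succ n ih =>
    obtain ⟨x, hx⟩ : ∃ x, σ x ≠ x := not_forall.1 fun hσ => by
      simp [show σ = 1 from Equiv.ext hσ] at hn
    have hlen := absLength_swap_apply_mul hx
    obtain ⟨l, hl, hprod, hlength⟩ := ih (swap x (σ x) * σ) (by omega)
    refine ⟨swap x (σ x) :: l, List.forall_mem_cons.2 ⟨⟨x, σ x, Ne.symm hx, rfl⟩, hl⟩, ?_, ?_⟩
    · rw [List.prod_cons, hprod, swap_mul_self_mul]
    · rw [List.length_cons, hlength]

lemma absLength_mul_le (σ ρ : Perm α) : absLength (σ * ρ) ≤ absLength σ + absLength ρ := by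
  obtain ⟨l₁, hl₁, rfl, hlen₁⟩ := exists_list_isSwap_prod_eq σ
  obtain ⟨l₂, hl₂, rfl, hlen₂⟩ := exists_list_isSwap_prod_eq ρ
  rw [← hlen₁, ← hlen₂, ← List.length_append, ← List.prod_append]
  exact absLength_list_prod_le _ fun τ hτ => (List.mem_append.1 hτ).elim (hl₁ τ) (hl₂ τ)

end AbsLength

section Geodesics

variable [Fintype α] [DecidableEq α] {ς π : Perm α} {x y : α}

def geodesics (ς : Perm α) : Finset (Perm α) :=
  {π | absLength π + absLength (π⁻¹ * ς) = absLength ς}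

@[simp] lemma mem_geodesics :
    π ∈ ς.geodesics ↔ absLength π + absLength (π⁻¹ * ς) = absLength ς := by
  simp [geodesics]

lemma geodesics_one : (1 : Perm α).geodesics = {1} := by
  ext π
  rw [mem_geodesics, mem_singleton, mul_one, absLength_inv, absLength_one]
  exact ⟨fun h => eq_one_of_absLength_eq_zero (by omega), fun h => by simp [h]⟩

lemma SameCycle.of_mem_geodesics (hπ : π ∈ ς.geodesics) (h : π.SameCycle x y) :
    ς.SameCycle x y := by
  induction hn : absLength (π⁻¹ * ς) using Nat.strong_induction_on generalizing π with
  | _ n ih =>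
  rw [mem_geodesics] at hπ
  set ρ := π⁻¹ * ς with hρ
  by_cases hρ1 : ρ = 1
  · rwa [← mul_inv_cancel_left π ς, ← hρ, hρ1, mul_one]
  obtain ⟨z, hz⟩ : ∃ z, ρ z ≠ z := not_forall.1 fun h => hρ1 (Equiv.ext h)
  -- `π' = π (z ρz)` lies one transposition further along the geodesic, so it merges two cycles
  set π' := π * swap z (ρ z)
  have hπ' : π' = swap (π z) (π (ρ z)) * π := mul_swap_eq_swap_mul _ _ _
  have hρ' : π'⁻¹ * ς = swap z (ρ z) * ρ := by rw [mul_inv_rev, swap_inv, mul_assoc]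
  have hshort := absLength_swap_apply_mul hz
  have hstep : absLength π' ≤ absLength π + 1 := hπ' ▸ absLength_swap_mul_le _ _ π
  have htri := absLength_mul_le π' (π'⁻¹ * ς)
  rw [mul_inv_cancel_left, hρ'] at htri
  have hmerge : ¬π.SameCycle (π z) (π (ρ z)) := fun hs => by
    have := absLength_swap_mul_le_of_sameCycle hs
    rw [← hπ'] at this
    omega
  exact ih (absLength (swap z (ρ z) * ρ)) (by omega) (π := π')
    (mem_geodesics.2 (by rw [hρ']; omega))
    (hπ' ▸ h.swap_mul_of_not_sameCycle hmerge) (by rw [hρ'])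

lemma apply_eq_self_of_mem_geodesics (hπ : π ∈ ς.geodesics) (hx : ς x = x) : π x = x :=
  ((SameCycle.of_mem_geodesics hπ (sameCycle_apply_right.2 .rfl)).eq_of_left hx).symm

lemma filter_geodesics_apply_eq_self (ς : Perm α) (x : α) :
    ς.geodesics.filter (· x = x) = (swap x (ς x) * ς).geodesics := by
  by_cases hς : ς x = x
  · rw [hς, swap_self, ← one_def, one_mul]
    exact filter_true_of_mem fun π hπ => apply_eq_self_of_mem_geodesics hπ hς
  have hlen := absLength_swap_apply_mul hς
  have key : ∀ π : Perm α, π x = x →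
      absLength (π⁻¹ * (swap x (ς x) * ς)) + 1 = absLength (π⁻¹ * ς) := fun π hπx => by
    have hπx' : π⁻¹ x = x := by rw [inv_eq_iff_eq, hπx]
    have hne : (π⁻¹ * ς) x ≠ x := by rwa [mul_apply, Ne, inv_eq_iff_eq, hπx]
    rw [← mul_assoc, mul_swap_eq_swap_mul, hπx', mul_assoc, ← mul_apply]
    exact absLength_swap_apply_mul hne
  ext π
  simp only [mem_filter, mem_geodesics]
  constructor
  · rintro ⟨h, hπx⟩
    have := key π hπx
    omega
  · intro h
    have hπx := apply_eq_self_of_mem_geodesics (x := x) (mem_geodesics.2 h)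
      (by rw [mul_apply, swap_apply_right])
    have := key π hπx
    exact ⟨by omega, hπx⟩

lemma card_filter_geodesics_apply_eq (h : ς.SameCycle x y) :
    #(ς.geodesics.filter (· x = y)) = #((swap x y * ς).geodesics.filter (· x = x)) := by
  rcases eq_or_ne x y with rfl | hxy
  · rw [swap_self, ← one_def, one_mul]
  have hlen := absLength_swap_mul_of_sameCycle hxy h
  refine card_equiv (Equiv.mulLeft (swap x y)) fun π => ?_
  have hinv : (swap x y * π)⁻¹ * (swap x y * ς) = π⁻¹ * ς := by
    rw [mul_inv_rev, swap_inv, mul_assoc, swap_mul_self_mul]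
  have hfix : swap x y (π x) = x ↔ π x = y := by rw [swap_apply_eq_iff, swap_apply_left]
  simp only [mem_filter, mem_geodesics, coe_mulLeft, mul_apply, hinv, hfix]
  refine and_congr_left fun hπx => ?_
  have := absLength_swap_mul_of_sameCycle hxy (hπx ▸ sameCycle_apply_right.2 .rfl)
  omega

end Geodesics

section CatalanWeight

variable [Fintype α] [DecidableEq α]

def catalanWeight (σ : Perm α) : ℕ := ∏ C ∈ σ.cycleClasses, catalan #C

lemma catalanWeight_one : (1 : Perm α).catalanWeight = 1 :=
  prod_eq_one fun C hC => by
    obtain ⟨x, rfl⟩ := mem_cycleClasses.1 hC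
    rw [cycleClass_of_apply_eq_self rfl, card_singleton, catalan_one]

lemma catalanWeight_eq_mul_prod_erase (σ : Perm α) (x : α) :
    σ.catalanWeight =
      catalan #(σ.cycleClass x) * ∏ C ∈ σ.cycleClasses.erase (σ.cycleClass x), catalan #C :=
  (mul_prod_erase _ _ (cycleClass_mem_cycleClasses σ x)).symm

lemma catalanWeight_swap_apply_mul (σ : Perm α) (x : α) :
    (swap x (σ x) * σ).catalanWeight =
      catalan (#(σ.cycleClass x) - 1) *
        ∏ C ∈ σ.cycleClasses.erase (σ.cycleClass x), catalan #C := by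
  by_cases hx : σ x = x
  · rw [hx, swap_self, ← one_def, one_mul, catalanWeight_eq_mul_prod_erase σ x,
      cycleClass_of_apply_eq_self hx, card_singleton, catalan_one, Nat.sub_self, catalan_zero]
  have hsc : σ.SameCycle x (σ x) := sameCycle_apply_right.2 .rfl
  have hone : #((swap x (σ x) * σ).cycleClass x) = 1 := by
    simpa using card_cycleClass_swap_mul_pow (σ := σ) (a := x) one_pos
      (one_lt_card_cycleClass_iff.2 hx)
  have hrest := card_cycleClass_swap_mul_add (Ne.symm hx) hsc
  rw [catalanWeight_eq_mul_prod_erase _ x, prod_erase_cycleClasses_swap_mul _ (Ne.symm hx) hsc,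
    hone, catalan_one, one_mul]
  congr 2
  omega

lemma sum_range_catalan_mul_catalan (n : ℕ) :
    ∑ j ∈ range (n + 1), catalan j * catalan (n - j) = catalan (n + 1) := by
  rw [catalan_succ, Fin.sum_univ_eq_sum_range (fun j => catalan j * catalan (n - j))]

end CatalanWeight

section Counting

variable [Fintype α] [DecidableEq α] {ς : Perm α} {x : α}

lemma exists_card_filter_geodesics_eq (hx : ς x ≠ x) {j : ℕ} (hj : j < #(ς.cycleClass x)) :
    ∃ ς' : Perm α, #(ς.geodesics.filter (· x = (ς ^ j) (ς x))) = #ς'.geodesics ∧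
      absLength ς' < absLength ς ∧
      ς'.catalanWeight = catalan j * catalan (#(ς.cycleClass x) - 1 - j) *
        ∏ C ∈ ς.cycleClasses.erase (ς.cycleClass x), catalan #C := by
  rw [← mul_apply, ← pow_succ]
  rcases (show j + 1 ≤ _ from hj).eq_or_lt with hjn | hjn
  · refine ⟨swap x (ς x) * ς, ?_, ?_, ?_⟩
    · rw [hjn, pow_card_cycleClass_apply, filter_geodesics_apply_eq_self]
    · have := absLength_swap_apply_mul hx
      omega
    · rw [catalanWeight_swap_apply_mul, ← hjn, Nat.add_sub_cancel, Nat.sub_self, catalan_zero,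
        mul_one]
  -- `π ↦ (x y) π` maps the fibre onto the geodesics to `(x y) ς` that fix `x`; the cycle of `x`
  -- in `(x y) ς` has length `j + 1`, and the other piece has length `n - 1 - j`
  have hk := card_cycleClass_swap_mul_pow (σ := ς) (a := x) (by omega) hjn
  have hxy : x ≠ (ς ^ (j + 1)) x := (pow_apply_ne_self (by omega) hjn).symm
  have hsc : ς.SameCycle x ((ς ^ (j + 1)) x) := sameCycle_pow_right.2 .rfl
  generalize (ς ^ (j + 1)) x = y at hk hxy hsc ⊢
  have hlen := absLength_swap_mul_of_sameCycle hxy hsc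
  have hadd := card_cycleClass_swap_mul_add hxy hsc
  refine ⟨swap x ((swap x y * ς) x) * (swap x y * ς), ?_, ?_, ?_⟩
  · rw [card_filter_geodesics_apply_eq hsc, filter_geodesics_apply_eq_self]
  · have := absLength_swap_apply_mul_le (swap x y * ς) x
    omega
  · rw [catalanWeight_swap_apply_mul, prod_erase_cycleClasses_swap_mul _ hxy hsc, hk,
      Nat.add_sub_cancel, ← mul_assoc]
    congr 3
    omega

theorem card_geodesics (ς : Perm α) : #ς.geodesics = ς.catalanWeight := by
  induction hn : absLength ς using Nat.strong_induction_on generalizing ς with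
  | _ n ih =>
  by_cases hς : ς = 1
  · rw [hς, geodesics_one, catalanWeight_one, card_singleton]
  obtain ⟨x, hx⟩ : ∃ x, ς x ≠ x := not_forall.1 fun h => hς (Equiv.ext h)
  have hcls : ς.cycleClass (ς x) = ς.cycleClass x :=
    cycleClass_eq_cycleClass_iff.2 (sameCycle_apply_left.2 .rfl)
  obtain ⟨m, hm⟩ : ∃ m, #(ς.cycleClass x) = m + 1 :=
    Nat.exists_eq_succ_of_ne_zero (card_pos.2 ⟨x, mem_cycleClass.2 .rfl⟩).ne'
  calc #ς.geodesics
      = ∑ y ∈ ς.cycleClass (ς x), #(ς.geodesics.filter (· x = y)) :=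
        card_eq_sum_card_fiberwise fun π hπ => mem_cycleClass.2 <| sameCycle_apply_left.2 <|
          SameCycle.of_mem_geodesics hπ (sameCycle_apply_right.2 .rfl)
    _ = ∑ j ∈ range (m + 1), #(ς.geodesics.filter (· x = (ς ^ j) (ς x))) := by
        rw [← image_range_card_cycleClass ς (ς x), sum_image (pow_apply_injOn_range ς (ς x)),
          hcls, hm]
    _ = ∑ j ∈ range (m + 1), catalan j * catalan (m - j) *
          ∏ C ∈ ς.cycleClasses.erase (ς.cycleClass x), catalan #C := by
        refine sum_congr rfl fun j hj => ?_
        obtain ⟨ς', hcard, hlt, hw⟩ := exists_card_filter_geodesics_eq hx (hm ▸ mem_range.1 hj)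
        rw [hcard, ih _ (hn ▸ hlt) ς' rfl, hw, hm, Nat.add_sub_cancel]
    _ = ς.catalanWeight := by
        rw [← sum_mul, sum_range_catalan_mul_catalan, ← hm, catalanWeight_eq_mul_prod_erase ς x]

end Counting

section CycleType

variable [Fintype α] [DecidableEq α] {σ : Perm α} {x : α}

lemma cycleClass_eq_support_cycleOf (hx : σ x ≠ x) : σ.cycleClass x = (σ.cycleOf x).support := by
  ext y
  rw [mem_cycleClass, mem_support_cycleOf_iff, mem_support]
  exact (and_iff_left hx).symm

lemma image_support_cycleFactorsFinset (σ : Perm α) :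
    σ.cycleFactorsFinset.image support = σ.cycleClasses.filter (1 < #·) := by
  ext C
  simp only [mem_image, mem_filter, mem_cycleClasses]
  constructor
  · rintro ⟨c, hc, rfl⟩
    obtain ⟨x, hx⟩ := (mem_cycleFactorsFinset_iff.1 hc).1.nonempty_support
    have hσx : σ x ≠ x := mem_support.1 (mem_cycleFactorsFinset_support_le hc hx)
    rw [cycle_is_cycleOf hx hc, ← cycleClass_eq_support_cycleOf hσx]
    exact ⟨⟨x, rfl⟩, one_lt_card_cycleClass_iff.2 hσx⟩
  · rintro ⟨⟨x, rfl⟩, h⟩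
    have hσx := one_lt_card_cycleClass_iff.1 h
    exact ⟨σ.cycleOf x, cycleOf_mem_cycleFactorsFinset_iff.2 (mem_support.2 hσx),
      (cycleClass_eq_support_cycleOf hσx).symm⟩

lemma support_injOn_cycleFactorsFinset (σ : Perm α) :
    Set.InjOn support (σ.cycleFactorsFinset : Set (Perm α)) := by
  intro c hc d hd h
  obtain ⟨x, hx⟩ := (mem_cycleFactorsFinset_iff.1 hc).1.nonempty_support
  rw [cycle_is_cycleOf hx hc, cycle_is_cycleOf (h ▸ hx) hd]

lemma image_cycleClass_fixedPoints (σ : Perm α) :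
    ({x | σ x = x} : Finset α).image σ.cycleClass = σ.cycleClasses.filter (¬1 < #·) := by
  ext C
  simp only [mem_image, mem_filter, mem_univ, true_and, mem_cycleClasses]
  constructor
  · rintro ⟨x, hx, rfl⟩
    exact ⟨⟨x, rfl⟩, fun h => one_lt_card_cycleClass_iff.1 h hx⟩
  · rintro ⟨⟨x, rfl⟩, h⟩
    exact ⟨x, not_not.1 (mt one_lt_card_cycleClass_iff.2 h), rfl⟩

lemma catalanWeight_eq_prod_cycleType (σ : Perm α) :
    σ.catalanWeight = (σ.cycleType.map catalan).prod := by
  rw [catalanWeight, ← prod_filter_of_ne (p := (1 < #·)), ← image_support_cycleFactorsFinset,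
    prod_image (support_injOn_cycleFactorsFinset σ), cycleType_def, Multiset.map_map,
    prod_eq_multiset_prod]
  · rfl
  · intro C _ hC
    by_contra h
    obtain h0 | h1 : #C = 0 ∨ #C = 1 := by omega
    · exact hC (by rw [h0, catalan_zero])
    · exact hC (by rw [h1, catalan_one])

end CycleType

end Equiv.Perm

open Equiv.Perm

lemma transLen_eq_absLength {p : ℕ} (σ : Perm (Fin p)) : transLen σ = absLength σ := by
  obtain ⟨l, hl, hprod, hlen⟩ := exists_list_isSwap_prod_eq σ
  refine le_antisymm (Nat.sInf_le ⟨l, hlen, hl, hprod⟩) (le_csInf ⟨_, l, hlen, hl, hprod⟩ ?_)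
  rintro n ⟨l', rfl, hl', rfl⟩
  exact absLength_list_prod_le l' hl'

lemma cycleCount_eq_card_cycleClasses {p : ℕ} (σ : Perm (Fin p)) :
    cycleCount σ = #σ.cycleClasses := by
  rw [cycleCount, ← card_filter_add_card_filter_not (s := σ.cycleClasses) (1 < #·),
    ← image_support_cycleFactorsFinset, card_image_of_injOn (support_injOn_cycleFactorsFinset σ),
    ← image_cycleClass_fixedPoints,
    card_image_of_injOn (s := {x | σ x = x})
      ((cycleClass_injOn_fixedPoints σ).mono fun _ hx => (mem_filter.1 hx).2),
    cycleType_def, Multiset.card_map]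
  rfl

/-- The number of permutations `π` lying on a geodesic between the identity
and a permutation `ς` which is a product of disjoint cycles of lengths
`p₁,…,p_L` is the product of the Catalan numbers `Cat_{p_i}` (fixed points,
i.e. cycles of length one, contribute a factor `Cat_1 = 1`, so it suffices to
take the product over the cycle type). -/
theorem stmt6 (p : ℕ) (ς : Equiv.Perm (Fin p)) :
    Nat.card {π : Equiv.Perm (Fin p) //
      transLen (ς⁻¹ * π) + transLen π = p - cycleCount ς} =
    (ς.cycleType.map catalan).prod := by
  have hς : p - cycleCount ς = absLength ς := by
    rw [cycleCount_eq_card_cycleClasses, absLength, Fintype.card_fin]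
  have hgeo : ∀ π, transLen (ς⁻¹ * π) + transLen π = p - cycleCount ς ↔ π ∈ ς.geodesics := by
    intro π
    rw [mem_geodesics, transLen_eq_absLength, transLen_eq_absLength, ← absLength_inv, mul_inv_rev,
      inv_inv, hς, add_comm]
  rw [Nat.card_congr (Equiv.subtypeEquivRight hgeo), Nat.card_eq_finsetCard, card_geodesics,
    catalanWeight_eq_prod_cycleType]
end

section
/- Associate to each permutation α ∈ 𝔖(p) the pair partition λ_α of {1,…,2p} obtained by replacing each cycle (i_l … i₁) of α with the product of transpositions (2i₁, 2i₂−1)(2i₂, 2i₃−1)⋯(2i_l, 2i₁−1). Then for every α ∈ 𝔖(p), ♯(α) + ♯(γ_p⁻¹α) = ♯(γ_{2p}⁻¹λ_α), where γ_p and γ_{2p} are the canonical full cycles on {1,…,p} and {1,…,2p} respectively. -/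
open Equiv Equiv.Perm

theorem Equiv.Perm.cycleType_extendDomain_mul_extendDomain {α β γ : Type*}
    [Fintype α] [DecidableEq α] [Fintype β] [DecidableEq β] [Fintype γ] [DecidableEq γ]
    {q : α → Prop} [DecidablePred q] (f : β ≃ Subtype q) (g : γ ≃ {a // ¬q a})
    (σ : Perm β) (τ : Perm γ) :
    (σ.extendDomain f * τ.extendDomain g).cycleType = σ.cycleType + τ.cycleType := by
  have hdisj : (σ.extendDomain f).Disjoint (τ.extendDomain g) := by
    intro a
    by_cases ha : q a
    · exact Or.inr (extendDomain_apply_not_subtype _ _ (not_not.mpr ha))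
    · exact Or.inl (extendDomain_apply_not_subtype _ _ ha)
  rw [hdisj.cycleType_mul, cycleType_extendDomain, cycleType_extendDomain]

theorem val_finRotate {n : ℕ} (i : Fin n) : (finRotate n i : ℕ) = ((i : ℕ) + 1) % n := by
  have : NeZero n := i.neZero
  simp [finRotate_apply, Fin.val_add]

def evenEquiv (p : ℕ) : Fin p ≃ {x : Fin (2 * p) // Even (x : ℕ)} where
  toFun m := ⟨⟨2 * (m : ℕ), by omega⟩, even_two_mul _⟩
  invFun x := ⟨(x : ℕ) / 2, by omega⟩
  left_inv m := by ext; simp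
  right_inv x := by
    obtain ⟨x, k, hk⟩ := x
    ext
    simp only
    omega

def oddEquiv (p : ℕ) : Fin p ≃ {x : Fin (2 * p) // ¬Even (x : ℕ)} where
  toFun m := ⟨⟨2 * (m : ℕ) + 1, by omega⟩, by simp⟩
  invFun x := ⟨(x : ℕ) / 2, by omega⟩
  left_inv m := by ext; simp; omega
  right_inv x := by
    obtain ⟨x, hx⟩ := x
    rw [Nat.not_even_iff_odd] at hx
    obtain ⟨k, hk⟩ := hx
    ext
    simp only
    omega

section

variable {p : ℕ}

theorem cycleCount_eq_card_cycleType_add (σ : Perm (Fin p)) :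
    cycleCount σ = σ.cycleType.card + (p - σ.cycleType.sum) := by
  have hfix := card_fixedPoints σ
  rw [Fintype.card_fin] at hfix
  rw [cycleCount, ← Fintype.card_subtype, ← hfix]
  rfl

theorem cycleCount_inv (σ : Perm (Fin p)) : cycleCount σ⁻¹ = cycleCount σ := by
  rw [cycleCount_eq_card_cycleType_add, cycleCount_eq_card_cycleType_add, cycleType_inv]

theorem finRotate_evenEquiv (m : Fin p) :
    finRotate (2 * p) (evenEquiv p m) = oddEquiv p m := by
  ext
  rw [val_finRotate]
  exact Nat.mod_eq_of_lt (by simp [evenEquiv]; omega)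

theorem finRotate_oddEquiv (m : Fin p) :
    finRotate (2 * p) (oddEquiv p m) = evenEquiv p (finRotate p m) := by
  ext
  simp only [val_finRotate, evenEquiv, oddEquiv, Equiv.coe_fn_mk]
  rw [show 2 * (m : ℕ) + 1 + 1 = 2 * ((m : ℕ) + 1) by ring, Nat.mul_mod_mul_left]

theorem evenEquiv_or_oddEquiv (x : Fin (2 * p)) :
    (∃ m, x = evenEquiv p m) ∨ ∃ m, x = oddEquiv p m := by
  by_cases hx : Even (x : ℕ)
  · exact Or.inl ⟨(evenEquiv p).symm ⟨x, hx⟩, by simp⟩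
  · exact Or.inr ⟨(oddEquiv p).symm ⟨x, hx⟩, by simp⟩

theorem cycleCount_extendDomain_evenEquiv_mul_oddEquiv (σ τ : Perm (Fin p)) :
    cycleCount (σ.extendDomain (evenEquiv p) * τ.extendDomain (oddEquiv p)) =
      cycleCount σ + cycleCount τ := by
  have hσ := sum_cycleType_le σ
  have hτ := sum_cycleType_le τ
  rw [Fintype.card_fin] at hσ hτ
  simp only [cycleCount_eq_card_cycleType_add, cycleType_extendDomain_mul_extendDomain,
    Multiset.card_add, Multiset.sum_add]
  omega

theorem finRotate_mul_eq_extendDomain_mul_extendDomain (α : Perm (Fin p))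
    (l : Perm (Fin (2 * p))) (h_even : ∀ m, l (evenEquiv p m) = oddEquiv p (α m))
    (h_odd : ∀ m, l (oddEquiv p m) = evenEquiv p (α⁻¹ m)) :
    finRotate (2 * p) * l =
      (finRotate p * α).extendDomain (evenEquiv p) * α⁻¹.extendDomain (oddEquiv p) := by
  ext1 x
  obtain ⟨m, rfl⟩ | ⟨m, rfl⟩ := evenEquiv_or_oddEquiv x
  · rw [mul_apply, h_even, finRotate_oddEquiv, mul_apply,
      extendDomain_apply_not_subtype α⁻¹ (oddEquiv p) (not_not.mpr (evenEquiv p m).2),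
      extendDomain_apply_image]
    rfl
  · rw [mul_apply, h_odd, finRotate_evenEquiv, mul_apply, extendDomain_apply_image,
      extendDomain_apply_not_subtype _ (evenEquiv p) (oddEquiv p (α⁻¹ m)).2]

end

/-- To `α ∈ 𝔖(p)` associate the even–odd pairing `λ_α` of `{1,…,2p}`:
in `1`-indexed terms each cycle `(i_l … i₁)` of `α` contributes the
transpositions `(2i₁, 2i₂−1)(2i₂, 2i₃−1)⋯(2i_l, 2i₁−1)`; equivalently, in
`0`-indexed terms, `λ_α` sends `2m ↦ 2α(m)+1` and `2m+1 ↦ 2α⁻¹(m)` (these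
conditions determine `λ_α` uniquely, and we take them as hypotheses on `l`).
Then `♯(α) + ♯(γ_p⁻¹α) = ♯(γ_{2p}⁻¹ λ_α)`. -/
theorem stmt15 (p : ℕ) (α : Equiv.Perm (Fin p)) (l : Equiv.Perm (Fin (2 * p)))
    (hl : ∀ m : Fin p,
      l ⟨2 * (m : ℕ), by have := m.isLt; omega⟩ =
        ⟨2 * ((α m : ℕ)) + 1, by have := (α m).isLt; omega⟩ ∧
      l ⟨2 * (m : ℕ) + 1, by have := m.isLt; omega⟩ =
        ⟨2 * ((α⁻¹ m : ℕ)), by have := (α⁻¹ m).isLt; omega⟩) :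
    cycleCount α + cycleCount ((gammaPerm p)⁻¹ * α) =
      cycleCount ((gammaPerm (2 * p))⁻¹ * l) := by
  -- `hl` is the hypothesis of the decomposition lemma with `evenEquiv`, `oddEquiv` unfolded.
  have hdecomp := finRotate_mul_eq_extendDomain_mul_extendDomain α l
    (fun m => (hl m).1) (fun m => (hl m).2)
  simp only [gammaPerm, inv_inv]
  rw [hdecomp, cycleCount_extendDomain_evenEquiv_mul_oddEquiv, cycleCount_inv, add_comm]
end

section
/- Let ς ∈ 𝔖(q) (q ≥ 6) and let τ₁, τ₂, τ₃ be three disjoint transpositions such that multiplying successively gives cycle counts ♯(ς τ₁) = ♯(ς)+1, ♯(ς τ₁τ₂) = ♯(ς)+2, ♯(ς τ₁τ₂τ₃) = ♯(ς)+1. Then there exists a permutation π of the indices {1,2,3} such that ♯(ς τ_{π(1)}) = ♯(ς)+1, ♯(ς τ_{π(1)}τ_{π(2)}) = ♯(ς), and ♯(ς τ_{π(1)}τ_{π(2)}τ_{π(3)}) = ♯(ς)+1. -/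
/-!
Multiplying a permutation by a transposition `(a b)` changes its cycle partition only inside the
union of the cycles of `a` and `b`: it splits the cycle through `a` and `b` when they share one
and merges their two cycles otherwise, so the cycle count goes up or down by exactly one.
If `τ₂` already merges two cycles of `ς τ₀`, the order `τ₀, τ₂, τ₁` works. Otherwise `τ₂` splits a
cycle of `ς τ₀` but merges at `ς τ₀ τ₁`, and the order `τ₁, τ₂, τ₀` works once we know that `τ₂`
merges at `ς τ₁`. Splitting by `τ₁ = (c d)` cuts an orbit `e, σ e, σ² e, …` into the arc `(c, d]`
and the rest, so whether it separates two points only depends on their positions along the orbit.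
Started at a suitable point, the cycle of `ς τ₀` carrying `c, d` and the endpoints of `τ₂` is
traversed by `ς` in the same way, so `τ₁` separates the endpoints of `τ₂` in `ς` exactly when it
does in `ς τ₀`.
-/

namespace Setoid

variable {α : Type*}

def mergeClasses (s : Setoid α) (a b : α) : Setoid α where
  r x y := s x y ∨ (s x a ∨ s x b) ∧ (s y a ∨ s y b)
  iseqv := by
    have hU : ∀ {x y}, s x y → s x a ∨ s x b → s y a ∨ s y b := fun hxy h =>
      h.imp (s.trans (s.symm hxy)) (s.trans (s.symm hxy))
    refine ⟨fun x => Or.inl (s.refl x), fun h => h.imp s.symm And.symm, fun h h' => ?_⟩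
    rcases h with h | ⟨hx, hy⟩ <;> rcases h' with h' | ⟨hy', hz⟩
    · exact Or.inl (s.trans h h')
    · exact Or.inr ⟨hU (s.symm h) hy', hz⟩
    · exact Or.inr ⟨hx, hU h' hy⟩
    · exact Or.inr ⟨hx, hz⟩

variable {s t : Setoid α} {a b : α}

theorem mergeClasses_eq_self (h : s a b) : s.mergeClasses a b = s := by
  have ha : ∀ {z}, s z a ∨ s z b → s z a := fun hz => hz.elim id (s.trans · (s.symm h))
  exact Setoid.ext fun x y =>
    ⟨fun hxy => hxy.elim id fun ⟨hx, hy⟩ => s.trans (ha hx) (s.symm (ha hy)), Or.inl⟩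

theorem mergeClasses_le_mergeClasses (h : s ≤ t.mergeClasses a b) :
    s.mergeClasses a b ≤ t.mergeClasses a b := by
  have hU : ∀ {z}, s z a ∨ s z b → t z a ∨ t z b := by
    rintro z (hz | hz)
    · exact (h hz).elim Or.inl And.left
    · exact (h hz).elim Or.inr And.left
  rintro x y (hxy | ⟨hx, hy⟩)
  · exact h hxy
  · exact Or.inr ⟨hU hx, hU hy⟩

theorem card_quotient_eq_card_quotient_mergeClasses_add_one [Finite α] (h : ¬s a b) :
    Nat.card (Quotient s) = Nat.card (Quotient (s.mergeClasses a b)) + 1 := by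
  classical
  let f : Quotient s → Option (Quotient (s.mergeClasses a b)) :=
    Quotient.lift (fun x => if s x b then none else some ⟦x⟧) fun x y hxy => by
      by_cases hx : s x b
      · simp [hx, s.trans (s.symm hxy) hx]
      · have hy : ¬s y b := fun hy => hx (s.trans hxy hy)
        simp only [hx, hy, if_false, Option.some.injEq]
        exact Quotient.eq.2 (Or.inl hxy)
  have hf : Function.Bijective f := by
    refine ⟨?_, ?_⟩
    · rintro ⟨x⟩ ⟨y⟩ hxy
      apply Quotient.sound
      change (if s x b then none else some ⟦x⟧) = (if s y b then none else some ⟦y⟧) at hxy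
      by_cases hx : s x b <;> by_cases hy : s y b <;>
        simp only [hx, hy, if_true, if_false, reduceCtorEq, Option.some.injEq, Quotient.eq] at hxy
      · exact s.trans hx (s.symm hy)
      · replace hxy : s x y ∨ (s x a ∨ s x b) ∧ (s y a ∨ s y b) := hxy
        obtain hxy | ⟨hxa, hya⟩ : s x y ∨ s x a ∧ s y a := by
          simpa only [hx, hy, or_false] using hxy
        exacts [hxy, s.trans hxa (s.symm hya)]
    · rintro (_ | ⟨⟨x⟩⟩)
      · exact ⟨⟦b⟧, if_pos (s.refl b)⟩
      · by_cases hx : s x b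
        · refine ⟨⟦a⟧, (if_neg h).trans ?_⟩
          exact congrArg some (Quotient.eq.2 (Or.inr ⟨Or.inl (s.refl a), Or.inr hx⟩))
        · exact ⟨⟦x⟧, if_neg hx⟩
  rw [Nat.card_congr (Equiv.ofBijective f hf), Finite.card_option]

end Setoid

open Function Set

namespace Equiv.Perm

variable {α : Type*} {σ τ : Perm α} {a b c d e x y : α}

theorem injOn_pow_apply_Iio_minimalPeriod :
    InjOn (fun n => (σ ^ n) x) (Iio (minimalPeriod σ x)) := by
  simpa only [coe_pow] using iterate_injOn_Iio_minimalPeriod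

theorem pow_apply_ne_self_of_lt_minimalPeriod {n : ℕ} (hn : n ≠ 0)
    (hn' : n < minimalPeriod σ x) : (σ ^ n) x ≠ x := by
  rw [coe_pow]
  exact not_isPeriodicPt_of_pos_of_lt_minimalPeriod hn hn'

theorem pow_apply_eq_pow_apply_of_forall_lt {n : ℕ}
    (h : ∀ k < n, τ ((τ ^ k) x) = σ ((τ ^ k) x)) : (τ ^ n) x = (σ ^ n) x := by
  induction n with
  | zero => rfl
  | succ n ih =>
    rw [pow_succ', pow_succ', mul_apply, mul_apply, h n n.lt_succ_self,
      ih fun k hk => h k (hk.trans n.lt_succ_self)]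

theorem mul_swap_apply_of_ne_of_ne [DecidableEq α] (ha : x ≠ a) (hb : x ≠ b) :
    (σ * swap a b) x = σ x := by
  rw [mul_apply, swap_apply_of_ne_of_ne ha hb]

theorem card_quotient_sameCycle [DecidableEq α] [Fintype α] (σ : Perm α) :
    Nat.card (Quotient (SameCycle.setoid σ)) =
      σ.cycleType.card + (Finset.univ.filter fun x => σ x = x).card := by
  let g : α → σ.cycleFactorsFinset ⊕ {x // σ x = x} := fun x =>
    if hx : σ x = x then .inr ⟨x, hx⟩
    else .inl ⟨σ.cycleOf x, cycleOf_mem_cycleFactorsFinset_iff.2 (mem_support.2 hx)⟩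
  have hg : ∀ x y, σ.SameCycle x y → g x = g y := fun x y hxy => by
    by_cases hx : σ x = x
    · obtain rfl := hxy.eq_of_left hx
      rfl
    · have hy : σ y ≠ y := mt hxy.apply_eq_self_iff.2 hx
      simp only [g, hx, hy, dif_neg, not_false_eq_true, hxy.cycleOf_eq]
  have hbij : Function.Bijective (Quotient.lift (s := SameCycle.setoid σ) g hg) := by
    refine ⟨?_, ?_⟩
    · rintro ⟨x⟩ ⟨y⟩ hxy
      apply Quotient.sound
      change g x = g y at hxy
      by_cases hx : σ x = x <;> by_cases hy : σ y = y <;>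
        simp only [g, hx, hy, dif_pos, dif_neg, not_false_eq_true, reduceCtorEq,
          Sum.inl.injEq, Sum.inr.injEq, Subtype.mk.injEq] at hxy
      · exact hxy ▸ SameCycle.refl σ x
      · exact (sameCycle_iff_cycleOf_eq_of_mem_support (mem_support.2 hx)
          (mem_support.2 hy)).2 hxy
    · rintro (⟨c, hc⟩ | ⟨x, hx⟩)
      · obtain ⟨x, hx⟩ := (mem_cycleFactorsFinset_iff.1 hc).1.nonempty_support
        have hσx : σ x ≠ x := by
          rw [← (mem_cycleFactorsFinset_iff.1 hc).2 x hx]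
          exact mem_support.1 hx
        refine ⟨⟦x⟧, ?_⟩
        simp only [Quotient.lift_mk, g, hσx, dif_neg, not_false_eq_true,
          ← cycle_is_cycleOf hx hc]
      · exact ⟨⟦x⟧, by simp only [Quotient.lift_mk, g, hx, dif_pos]⟩
  rw [Nat.card_congr (Equiv.ofBijective _ hbij), Nat.card_sum, Nat.card_eq_fintype_card,
    Fintype.card_coe, cycleType_def, Multiset.card_map, Nat.card_eq_fintype_card,
    Fintype.card_subtype]
  rfl

variable [Finite α]

theorem SameCycle.setoid_le {r : Setoid α} (h : ∀ z, r z (σ z)) :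
    SameCycle.setoid σ ≤ r := by
  intro x y hxy
  obtain ⟨n, rfl⟩ := hxy.exists_nat_pow_eq
  clear hxy
  induction n with
  | zero => exact r.refl x
  | succ n ih =>
    rw [pow_succ', mul_apply]
    exact r.trans ih (h _)

theorem SameCycle.mem_of_mapsTo {s : Set α} (hs : MapsTo σ s s) (hxy : σ.SameCycle x y)
    (hx : x ∈ s) : y ∈ s := by
  obtain ⟨n, rfl⟩ := hxy.exists_nat_pow_eq
  rw [coe_pow]
  exact hs.iterate n hx

theorem minimalPeriod_pos (σ : Perm α) (x : α) : 0 < minimalPeriod σ x :=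
  minimalPeriod_pos_of_mem_periodicPts ⟨orderOf σ, orderOf_pos σ, by
    rw [IsPeriodicPt, IsFixedPt, ← coe_pow, pow_orderOf_eq_one, one_apply]⟩

theorem SameCycle.exists_pow_eq_of_lt_minimalPeriod (h : σ.SameCycle x y) :
    ∃ k < minimalPeriod σ x, (σ ^ k) x = y := by
  obtain ⟨n, rfl⟩ := h.exists_nat_pow_eq
  refine ⟨n % minimalPeriod σ x, Nat.mod_lt _ (minimalPeriod_pos σ x), ?_⟩
  simp only [coe_pow, iterate_mod_minimalPeriod_eq]

theorem exists_sameCycle_forall_pow_apply_ne (hab : ¬σ.SameCycle a b) (z : α) :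
    ∃ e, σ.SameCycle e z ∧
      ∀ k, k + 1 < minimalPeriod σ e → (σ ^ k) e ≠ a ∧ (σ ^ k) e ≠ b := by
  have hret : ∀ w k, k + 1 < minimalPeriod σ (σ w) → (σ ^ k) (σ w) ≠ w := fun w k hk => by
    rw [← mul_apply, ← pow_succ]
    refine pow_apply_ne_self_of_lt_minimalPeriod k.succ_ne_zero ?_
    rwa [← minimalPeriod_apply (minimalPeriod_pos_iff_mem_periodicPts.1 (minimalPeriod_pos σ w))]
  have hfar : ∀ {e w}, ¬σ.SameCycle e w → ∀ k, (σ ^ k) e ≠ w := fun h k hk =>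
    h (hk ▸ sameCycle_pow_right.2 (SameCycle.refl σ _))
  by_cases hza : σ.SameCycle z a
  · refine ⟨σ a, sameCycle_apply_left.2 hza.symm, fun k hk => ⟨hret a k hk, hfar ?_ k⟩⟩
    exact fun h => hab (sameCycle_apply_left.1 h)
  by_cases hzb : σ.SameCycle z b
  · refine ⟨σ b, sameCycle_apply_left.2 hzb.symm, fun k hk => ⟨hfar ?_ k, hret b k hk⟩⟩
    exact fun h => hab (sameCycle_apply_left.1 h).symm
  · exact ⟨z, SameCycle.refl σ z, fun k _ => ⟨hfar hza k, hfar hzb k⟩⟩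

variable [DecidableEq α]

theorem sameCycle_setoid_le_mergeClasses_mul_swap (a b : α) :
    SameCycle.setoid σ ≤ (SameCycle.setoid (σ * swap a b)).mergeClasses a b := by
  refine SameCycle.setoid_le fun z => ?_
  have hstep : (σ * swap a b).SameCycle (swap a b z) (σ z) := ⟨1, by simp [mul_apply]⟩
  refine (Setoid.mergeClasses _ a b).trans ?_ (Or.inl hstep)
  rcases eq_or_ne z a with rfl | hza
  · exact Or.inr ⟨Or.inl (SameCycle.refl _ _), by simp⟩
  rcases eq_or_ne z b with rfl | hzb
  · exact Or.inr ⟨Or.inr (SameCycle.refl _ _), by simp⟩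
  · rw [swap_apply_of_ne_of_ne hza hzb]

theorem mergeClasses_sameCycle_mul_swap (a b : α) :
    (SameCycle.setoid (σ * swap a b)).mergeClasses a b
      = (SameCycle.setoid σ).mergeClasses a b := by
  refine le_antisymm (Setoid.mergeClasses_le_mergeClasses ?_)
    (Setoid.mergeClasses_le_mergeClasses (sameCycle_setoid_le_mergeClasses_mul_swap a b))
  simpa only [mul_swap_mul_self] using
    sameCycle_setoid_le_mergeClasses_mul_swap (σ := σ * swap a b) a b

theorem SameCycle.of_mul_swap (hab : σ.SameCycle a b) (h : (σ * swap a b).SameCycle x y) :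
    σ.SameCycle x y := by
  have h' : (SameCycle.setoid (σ * swap a b)).mergeClasses a b x y := Or.inl h
  rwa [mergeClasses_sameCycle_mul_swap, Setoid.mergeClasses_eq_self hab] at h'

theorem SameCycle.sameCycle_of_not_sameCycle_mul_swap (hcd : σ.SameCycle c d)
    (hxy : σ.SameCycle x y) (h : ¬(σ * swap c d).SameCycle x y) : σ.SameCycle x c := by
  by_contra hxc
  have hxd : ¬σ.SameCycle x d := fun hxd => hxc (hxd.trans hcd.symm)
  rcases sameCycle_setoid_le_mergeClasses_mul_swap c d hxy with h' | ⟨hx | hx, -⟩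
  · exact h h'
  · exact hxc (hcd.of_mul_swap hx)
  · exact hxd (hcd.of_mul_swap hx)

theorem sameCycle_mul_swap_pow_apply_iff {N i j k l : ℕ}
    (hinj : InjOn (fun n => (σ ^ n) e) (Iio N)) (hij : i < j) (hjN : j < N) (hk : k < N)
    (hl : l < N) :
    (σ * swap ((σ ^ i) e) ((σ ^ j) e)).SameCycle ((σ ^ k) e) ((σ ^ l) e) ↔
      (k ∈ Ioc i j ↔ l ∈ Ioc i j) := by
  set arc := (fun n => (σ ^ n) e) '' Ioc i j
  have hmem : ∀ {m}, m < N → ((σ ^ m) e ∈ arc ↔ m ∈ Ioc i j) := fun hm =>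
    hinj.mem_image_iff (fun n hn => hn.2.trans_lt hjN) hm
  have hne : ∀ {m n}, m < N → n < N → m ≠ n → (σ ^ m) e ≠ (σ ^ n) e :=
    fun hm hn hmn h => hmn (hinj hm hn h)
  have hmaps : MapsTo (σ * swap ((σ ^ i) e) ((σ ^ j) e)) arc arc := by
    rintro _ ⟨m, ⟨him, hmj⟩, rfl⟩
    rcases hmj.lt_or_eq with hmj | rfl
    · refine ⟨m + 1, ⟨by omega, hmj⟩, ?_⟩
      rw [mul_swap_apply_of_ne_of_ne (hne (by omega) (by omega) him.ne')
        (hne (by omega) hjN hmj.ne)]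
      simp only [pow_succ', mul_apply]
    · refine ⟨i + 1, ⟨by omega, him⟩, ?_⟩
      simp only [mul_apply, swap_apply_right, pow_succ']
  have hside : ∀ {z w}, (σ * swap ((σ ^ i) e) ((σ ^ j) e)).SameCycle z w →
      (z ∈ arc ↔ w ∈ arc) := fun h => ⟨h.mem_of_mapsTo hmaps, h.symm.mem_of_mapsTo hmaps⟩
  rw [← hmem hk, ← hmem hl]
  refine ⟨hside, fun h => ?_⟩
  have hc : (σ ^ i) e ∉ arc := fun hc => (lt_irrefl i) ((hmem (by omega)).1 hc).1
  have hd : (σ ^ j) e ∈ arc := (hmem hjN).2 ⟨hij, le_rfl⟩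
  have hkl : σ.SameCycle ((σ ^ k) e) ((σ ^ l) e) :=
    sameCycle_pow_left.2 (sameCycle_pow_right.2 (SameCycle.refl σ e))
  -- `c` lies off the arc and `d` on it, so the two points cannot be joined only through them.
  rcases sameCycle_setoid_le_mergeClasses_mul_swap _ _ hkl with h' | ⟨hu | hu, hv | hv⟩
  · exact h'
  · exact hu.trans hv.symm
  · exact absurd (h.2 ((hside hv).2 hd)) fun hu' => hc ((hside hu).1 hu')
  · exact absurd (h.1 ((hside hu).2 hd)) fun hv' => hc ((hside hv).1 hv')
  · exact hu.trans hv.symm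

theorem not_sameCycle_mul_swap (hab : a ≠ b) (h : σ.SameCycle a b) :
    ¬(σ * swap a b).SameCycle a b := by
  obtain ⟨j, hj, rfl⟩ := h.exists_pow_eq_of_lt_minimalPeriod
  have hj0 : 0 < j := Nat.pos_of_ne_zero fun hj0 => hab (by simp [hj0])
  have := sameCycle_mul_swap_pow_apply_iff injOn_pow_apply_Iio_minimalPeriod hj0 hj
    (minimalPeriod_pos σ a) hj
  simp only [pow_zero, one_apply] at this
  simp [this, hj0]

theorem sameCycle_mul_swap_of_not_sameCycle (h : ¬σ.SameCycle a b) :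
    (σ * swap a b).SameCycle a b := by
  set L := minimalPeriod σ b
  have hσb : (σ * swap a b) a = σ b := by rw [mul_apply, swap_apply_left]
  have hwalk : ((σ * swap a b) ^ (L - 1)) (σ b) = b := by
    have hL := minimalPeriod_pos σ b
    rw [← pow_apply_eq_pow_apply_of_forall_lt fun k hk => ?_, ← mul_apply, ← pow_succ,
      Nat.sub_add_cancel hL, coe_pow, iterate_minimalPeriod]
    have hz : (σ ^ k) (σ b) = (σ ^ (k + 1)) b := by rw [pow_succ, mul_apply]
    rw [hz]
    refine (mul_swap_apply_of_ne_of_ne (fun ha => h ?_) ?_).symm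
    · exact ha ▸ (sameCycle_pow_right.2 (SameCycle.refl σ b)).symm
    · exact pow_apply_ne_self_of_lt_minimalPeriod k.succ_ne_zero (by omega)
  have h' := (sameCycle_pow_right (n := L - 1)).2
    (sameCycle_apply_right.2 (SameCycle.refl (σ * swap a b) a))
  rwa [hσb, hwalk] at h'

theorem sameCycle_mul_swap_pow_apply_iff_of_eqOn {N i j k l : ℕ}
    (hinj : InjOn (fun n => (τ ^ n) e) (Iio N)) (hτσ : ∀ n < N, (τ ^ n) e = (σ ^ n) e)
    (hij : i ≠ j) (hi : i < N) (hj : j < N) (hk : k < N) (hl : l < N) :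
    (τ * swap ((τ ^ i) e) ((τ ^ j) e)).SameCycle ((τ ^ k) e) ((τ ^ l) e) ↔
      (σ * swap ((τ ^ i) e) ((τ ^ j) e)).SameCycle ((τ ^ k) e) ((τ ^ l) e) := by
  wlog hlt : i < j generalizing i j
  · rw [swap_comm]
    exact this hij.symm hj hi (by omega)
  have hinj' : InjOn (fun n => (σ ^ n) e) (Iio N) := hinj.congr fun n hn => hτσ n hn
  rw [sameCycle_mul_swap_pow_apply_iff hinj hlt hj hk hl, hτσ i hi, hτσ j hj, hτσ k hk,
    hτσ l hl, sameCycle_mul_swap_pow_apply_iff hinj' hlt hj hk hl]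

theorem not_sameCycle_mul_swap_of_sameCycle_mul_swap (hab : a ≠ b) (hcd : c ≠ d)
    (h₁ : σ.SameCycle a b) (h₂ : (σ * swap a b).SameCycle c d)
    (h₃ : (σ * swap a b).SameCycle x y) (h₄ : ¬(σ * swap a b * swap c d).SameCycle x y) :
    ¬(σ * swap c d).SameCycle x y := by
  obtain ⟨e, hex, havoid⟩ :=
    exists_sameCycle_forall_pow_apply_ne (not_sameCycle_mul_swap hab h₁) x
  have hxc := h₂.sameCycle_of_not_sameCycle_mul_swap h₃ h₄
  have hagree : ∀ n < minimalPeriod (σ * swap a b) e, ((σ * swap a b) ^ n) e = (σ ^ n) e :=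
    fun n hn => pow_apply_eq_pow_apply_of_forall_lt fun k hk =>
      mul_swap_apply_of_ne_of_ne (havoid k (by omega)).1 (havoid k (by omega)).2
  obtain ⟨i, hi, rfl⟩ := (hex.trans hxc).exists_pow_eq_of_lt_minimalPeriod
  obtain ⟨j, hj, rfl⟩ := (hex.trans (hxc.trans h₂)).exists_pow_eq_of_lt_minimalPeriod
  obtain ⟨k, hk, rfl⟩ := hex.exists_pow_eq_of_lt_minimalPeriod
  obtain ⟨l, hl, rfl⟩ := (hex.trans h₃).exists_pow_eq_of_lt_minimalPeriod
  rwa [sameCycle_mul_swap_pow_apply_iff_of_eqOn injOn_pow_apply_Iio_minimalPeriod hagree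
    (fun hij => hcd (by rw [hij])) hi hj hk hl] at h₄

end Equiv.Perm

open Equiv Equiv.Perm

section CycleCount

variable {p : ℕ} {σ : Perm (Fin p)} {a b : Fin p}

theorem cycleCount_mul_swap_of_sameCycle (hab : a ≠ b) (h : σ.SameCycle a b) :
    cycleCount (σ * swap a b) = cycleCount σ + 1 := by
  simp only [cycleCount, ← card_quotient_sameCycle]
  rw [Setoid.card_quotient_eq_card_quotient_mergeClasses_add_one (not_sameCycle_mul_swap hab h),
    mergeClasses_sameCycle_mul_swap, Setoid.mergeClasses_eq_self h]

theorem cycleCount_mul_swap_of_not_sameCycle (h : ¬σ.SameCycle a b) :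
    cycleCount (σ * swap a b) + 1 = cycleCount σ := by
  have hab : a ≠ b := fun hab => h (hab ▸ SameCycle.refl σ a)
  simpa only [mul_swap_mul_self] using
    (cycleCount_mul_swap_of_sameCycle hab (sameCycle_mul_swap_of_not_sameCycle h)).symm

theorem sameCycle_iff_cycleCount_mul_swap (hab : a ≠ b) :
    σ.SameCycle a b ↔ cycleCount (σ * swap a b) = cycleCount σ + 1 := by
  refine ⟨cycleCount_mul_swap_of_sameCycle hab, fun h => by_contra fun hn => ?_⟩
  have := cycleCount_mul_swap_of_not_sameCycle hn
  omega

theorem cycleCount_mul_of_isSwap {t : Perm (Fin p)} (ht : t.IsSwap) (σ : Perm (Fin p)) :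
    cycleCount (σ * t) = cycleCount σ + 1 ∨ cycleCount (σ * t) + 1 = cycleCount σ := by
  obtain ⟨a, b, hab, rfl⟩ := ht
  by_cases h : σ.SameCycle a b
  exacts [Or.inl (cycleCount_mul_swap_of_sameCycle hab h),
    Or.inr (cycleCount_mul_swap_of_not_sameCycle h)]

theorem cycleCount_mul_mul_add_one_of_isSwap {s t u : Perm (Fin p)} (hs : s.IsSwap)
    (ht : t.IsSwap) (hu : u.IsSwap) (h₁ : cycleCount (σ * s) = cycleCount σ + 1)
    (h₂ : cycleCount (σ * s * t) = cycleCount (σ * s) + 1)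
    (h₃ : cycleCount (σ * s * u) = cycleCount (σ * s) + 1)
    (h₄ : cycleCount (σ * s * t * u) + 1 = cycleCount (σ * s * t)) :
    cycleCount (σ * t * u) + 1 = cycleCount (σ * t) := by
  obtain ⟨a, b, hab, rfl⟩ := hs
  obtain ⟨c, d, hcd, rfl⟩ := ht
  obtain ⟨x, y, hxy, rfl⟩ := hu
  refine cycleCount_mul_swap_of_not_sameCycle <|
    not_sameCycle_mul_swap_of_sameCycle_mul_swap hab hcd
      ((sameCycle_iff_cycleCount_mul_swap hab).2 h₁)
      ((sameCycle_iff_cycleCount_mul_swap hcd).2 h₂)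
      ((sameCycle_iff_cycleCount_mul_swap hxy).2 h₃) fun h => ?_
  have := cycleCount_mul_swap_of_sameCycle hxy h
  omega

end CycleCount

theorem stmt16_general (q : ℕ) (ς : Equiv.Perm (Fin q))
    (τ : Fin 3 → Equiv.Perm (Fin q))
    (hswap : ∀ i, (τ i).IsSwap)
    (hdisj : ∀ i j, i ≠ j → (τ i).Disjoint (τ j))
    (h1 : cycleCount (ς * τ 0) = cycleCount ς + 1)
    (h2 : cycleCount (ς * τ 0 * τ 1) = cycleCount ς + 2)
    (h3 : cycleCount (ς * τ 0 * τ 1 * τ 2) = cycleCount ς + 1) :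
    ∃ π : Equiv.Perm (Fin 3),
      cycleCount (ς * τ (π 0)) = cycleCount ς + 1 ∧
      cycleCount (ς * τ (π 0) * τ (π 1)) = cycleCount ς ∧
      cycleCount (ς * τ (π 0) * τ (π 1) * τ (π 2)) = cycleCount ς + 1 := by
  have hcomm : ∀ σ i j, i ≠ j → σ * τ i * τ j = σ * τ j * τ i := fun σ i j h => by
    rw [mul_assoc, (hdisj i j h).commute.eq, ← mul_assoc]
  have e₁ : ς * τ 1 * τ 2 * τ 0 = ς * τ 0 * τ 1 * τ 2 := by
    rw [hcomm _ 2 0 (by decide), hcomm ς 1 0 (by decide)]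
  have e₂ : ς * τ 0 * τ 2 * τ 1 = ς * τ 0 * τ 1 * τ 2 := hcomm _ 2 1 (by decide)
  rcases cycleCount_mul_of_isSwap (hswap 2) (ς * τ 0) with h02 | h02
  · have h12 := cycleCount_mul_mul_add_one_of_isSwap (hswap 0) (hswap 1) (hswap 2) h1
      (by omega) h02 (by omega)
    have h10 := cycleCount_mul_of_isSwap (hswap 0) (ς * τ 1)
    rw [hcomm ς 1 0 (by decide)] at h10
    have h1' := cycleCount_mul_of_isSwap (hswap 1) ς
    refine ⟨finRotate 3, ?_⟩
    rw [show finRotate 3 0 = 1 from rfl, show finRotate 3 1 = 2 from rfl,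
      show finRotate 3 2 = 0 from rfl, e₁]
    omega
  · refine ⟨swap 1 2, ?_⟩
    rw [swap_apply_of_ne_of_ne (by decide) (by decide), swap_apply_left, swap_apply_right, e₂]
    omega

theorem stmt16 (q : ℕ) (hq : 6 ≤ q) (ς : Equiv.Perm (Fin q))
    (τ : Fin 3 → Equiv.Perm (Fin q))
    (hswap : ∀ i, (τ i).IsSwap)
    (hdisj : ∀ i j, i ≠ j → (τ i).Disjoint (τ j))
    (h1 : cycleCount (ς * τ 0) = cycleCount ς + 1)
    (h2 : cycleCount (ς * τ 0 * τ 1) = cycleCount ς + 2)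
    (h3 : cycleCount (ς * τ 0 * τ 1 * τ 2) = cycleCount ς + 1) :
    ∃ π : Equiv.Perm (Fin 3),
      cycleCount (ς * τ (π 0)) = cycleCount ς + 1 ∧
      cycleCount (ς * τ (π 0) * τ (π 1)) = cycleCount ς ∧
      cycleCount (ς * τ (π 0) * τ (π 1) * τ (π 2)) = cycleCount ς + 1 :=
  stmt16_general q ς τ hswap hdisj h1 h2 h3
end
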